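/- arXiv:1604.05590 — 6 statements merged into one kernel-verified Lean document; each statement's English description precedes it below -/
import Mathlib

section
/- For all integers d ≥ 1 and n ≥ t ≥ 1, every real r, and all databases S, S' ∈ (ℝ^d)^n that differ in exactly one entry, it holds that |L(r, S) − L(r, S')| ≤ 2. -/
/-- Number of entries of the database `S` inside the closed ball of radius `r` around `x`. -/
noncomputable def ballCount {d n : ℕ} (S : Fin n → EuclideanSpace ℝ (Fin d))
    (x : EuclideanSpace ℝ (Fin d)) (r : ℝ) : ℕ :=
  Nat.card {i : Fin n // dist (S i) x ≤ r}

/-- `B̄_r(x,S) = min{B_r(x,S), t}`, with value `0` for `r < 0`. -/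
noncomputable def cappedBallCount {d n : ℕ} (t : ℕ) (S : Fin n → EuclideanSpace ℝ (Fin d))
    (r : ℝ) (x : EuclideanSpace ℝ (Fin d)) : ℕ :=
  if r < 0 then 0 else min (ballCount S x r) t

/-- `L(r,S)`: the average of the `t` largest values of `B̄_r(x_i, S)` over `t` distinct
indices `i`, i.e. `(1/t)` times the maximum over sets `I` of `t` distinct indices of
`∑_{i ∈ I} B̄_r(x_i, S)`. -/
noncomputable def Lfun {d n : ℕ} (t : ℕ) (S : Fin n → EuclideanSpace ℝ (Fin d)) (r : ℝ) : ℝ :=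
  (((Finset.univ.powersetCard t).sup fun I : Finset (Fin n) =>
      ∑ i ∈ I, cappedBallCount t S r (S i) : ℕ) : ℝ) / t

open Finset in
lemma aux_sup_le {d n : ℕ} (t : ℕ) (r : ℝ)
    (S S' : Fin n → EuclideanSpace ℝ (Fin d))
    (i₀ : Fin n) (hij : ∀ j, j ≠ i₀ → S j = S' j) :
    ((Finset.univ.powersetCard t).sup fun I : Finset (Fin n) =>
      ∑ i ∈ I, cappedBallCount t S r (S i)) ≤
    ((Finset.univ.powersetCard t).sup fun I : Finset (Fin n) =>
      ∑ i ∈ I, cappedBallCount t S' r (S' i)) + 2 * t := by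
  classical
  have hball : ∀ x, ballCount S x r ≤ ballCount S' x r + 1 := by
    intro x
    unfold ballCount
    rw [Nat.card_eq_fintype_card, Nat.card_eq_fintype_card,
      Fintype.card_subtype, Fintype.card_subtype]
    have hsub : univ.filter (fun i => dist (S i) x ≤ r) ⊆
        insert i₀ (univ.filter (fun i => dist (S' i) x ≤ r)) := by
      intro i hi
      simp only [mem_filter, mem_univ, true_and] at hi
      by_cases h : i = i₀
      · simp [h]
      · simp only [mem_insert, mem_filter, mem_univ, true_and]
        right
        rw [← hij i h]
        exact hi
    calc (univ.filter (fun i => dist (S i) x ≤ r)).card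
        ≤ (insert i₀ (univ.filter fun i => dist (S' i) x ≤ r)).card := card_le_card hsub
      _ ≤ (univ.filter fun i => dist (S' i) x ≤ r).card + 1 := card_insert_le _ _
  have hcap_le_t : ∀ (T : Fin n → EuclideanSpace ℝ (Fin d)) x,
      cappedBallCount t T r x ≤ t := by
    intro T x
    unfold cappedBallCount
    split
    · exact Nat.zero_le t
    · exact min_le_right _ _
  have hcap : ∀ i, i ≠ i₀ →
      cappedBallCount t S r (S i) ≤ cappedBallCount t S' r (S' i) + 1 := by
    intro i hi
    unfold cappedBallCount
    split
    · exact Nat.zero_le _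
    · rw [hij i hi]
      have := hball (S' i)
      omega
  apply Finset.sup_le
  intro I hI
  have hIcard : I.card = t := (Finset.mem_powersetCard.mp hI).2
  have hkey : ∑ i ∈ I, cappedBallCount t S r (S i) ≤
      (∑ i ∈ I, cappedBallCount t S' r (S' i)) + 2 * t := by
    by_cases h0 : i₀ ∈ I
    · rw [← Finset.sum_erase_add _ _ h0, ← Finset.sum_erase_add _ _ h0]
      have h1 : ∑ i ∈ I.erase i₀, cappedBallCount t S r (S i) ≤
          (∑ i ∈ I.erase i₀, cappedBallCount t S' r (S' i)) + (I.erase i₀).card := by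
        rw [Finset.card_eq_sum_ones, ← Finset.sum_add_distrib]
        exact Finset.sum_le_sum fun i hi => hcap i (Finset.ne_of_mem_erase hi)
      have h2 := hcap_le_t S (S i₀)
      have h3 : (I.erase i₀).card ≤ t := le_trans (Finset.card_erase_le) hIcard.le
      omega
    · have h1 : ∑ i ∈ I, cappedBallCount t S r (S i) ≤
          (∑ i ∈ I, cappedBallCount t S' r (S' i)) + I.card := by
        rw [Finset.card_eq_sum_ones, ← Finset.sum_add_distrib]
        exact Finset.sum_le_sum fun i hi => hcap i (fun h => h0 (h ▸ hi))
      omega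
  exact le_trans hkey (Nat.add_le_add_right (Finset.le_sup (f := fun I : Finset (Fin n) => ∑ i ∈ I, cappedBallCount t S' r (S' i)) hI) _)

lemma Lfun_le {d n : ℕ} (t : ℕ) (ht : 1 ≤ t) (r : ℝ)
    (S S' : Fin n → EuclideanSpace ℝ (Fin d))
    (i₀ : Fin n) (hij : ∀ j, j ≠ i₀ → S j = S' j) :
    Lfun t S r ≤ Lfun t S' r + 2 := by
  have h := aux_sup_le t r S S' i₀ hij
  have ht0 : (0 : ℝ) < t := by exact_mod_cast ht
  unfold Lfun
  rw [div_add' _ _ _ ht0.ne', div_le_div_iff_of_pos_right ht0]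
  calc (((Finset.univ.powersetCard t).sup fun I : Finset (Fin n) =>
      ∑ i ∈ I, cappedBallCount t S r (S i) : ℕ) : ℝ)
      ≤ ((((Finset.univ.powersetCard t).sup fun I : Finset (Fin n) =>
      ∑ i ∈ I, cappedBallCount t S' r (S' i)) + 2 * t : ℕ) : ℝ) := by exact_mod_cast h
    _ = _ := by push_cast; ring

theorem Lfun_sensitivity (d n t : ℕ) (hd : 1 ≤ d) (ht : 1 ≤ t) (htn : t ≤ n) (r : ℝ)
    (S S' : Fin n → EuclideanSpace ℝ (Fin d))
    (hneighbor : ∃ i₀, S i₀ ≠ S' i₀ ∧ ∀ j, j ≠ i₀ → S j = S' j) :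
    |Lfun t S r - Lfun t S' r| ≤ 2 := by
  obtain ⟨i₀, _, hij⟩ := hneighbor
  rw [abs_sub_le_iff]
  constructor
  · have := Lfun_le t ht r S S' i₀ hij
    linarith
  · have := Lfun_le t ht r S' S i₀ (fun j hj => (hij j hj).symm)
    linarith
end

section
/- Fix integers d ≥ 1 and n ≥ t ≥ 1, a database S ∈ (ℝ^d)^n, and a real Γ. Define Q(r) = (1/2)·min{ t − L(r/2, S), L(r, S) − t + 4Γ } for r ∈ ℝ. Then Q is quasi-concave: for all reals r₁ ≤ r₂ ≤ r₃, Q(r₂) ≥ min{Q(r₁), Q(r₃)}. -/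
lemma ballCount_mono {d n : ℕ} (S : Fin n → EuclideanSpace ℝ (Fin d))
    (x : EuclideanSpace ℝ (Fin d)) {r₁ r₂ : ℝ} (h : r₁ ≤ r₂) :
    ballCount S x r₁ ≤ ballCount S x r₂ := by
  simp only [ballCount, Nat.card_eq_fintype_card]
  exact Fintype.card_subtype_mono _ _ fun i hi => le_trans hi h

lemma cappedBallCount_mono {d n : ℕ} (t : ℕ) (S : Fin n → EuclideanSpace ℝ (Fin d))
    {r₁ r₂ : ℝ} (h : r₁ ≤ r₂) (x : EuclideanSpace ℝ (Fin d)) :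
    cappedBallCount t S r₁ x ≤ cappedBallCount t S r₂ x := by
  unfold cappedBallCount
  split_ifs with h1 h2 h2
  · exact Nat.zero_le _
  · exact Nat.zero_le _
  · exact absurd (lt_of_le_of_lt h h2) (not_lt.mpr (not_lt.mp h1))
  · exact min_le_min (ballCount_mono S x h) le_rfl

lemma Lfun_mono {d n : ℕ} (t : ℕ) (S : Fin n → EuclideanSpace ℝ (Fin d))
    {r₁ r₂ : ℝ} (h : r₁ ≤ r₂) : Lfun t S r₁ ≤ Lfun t S r₂ := by
  rcases Nat.eq_zero_or_pos t with rfl | htpos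
  · simp [Lfun]
  unfold Lfun
  gcongr
  exact cappedBallCount_mono t S h _

theorem Q_quasiConcave (d n t : ℕ) (hd : 1 ≤ d) (ht : 1 ≤ t) (htn : t ≤ n)
    (S : Fin n → EuclideanSpace ℝ (Fin d)) (Γ : ℝ)
    (Q : ℝ → ℝ)
    (hQ : ∀ r : ℝ, Q r = (1 / 2) * min ((t : ℝ) - Lfun t S (r / 2)) (Lfun t S r - t + 4 * Γ)) :
    ∀ r₁ r₂ r₃ : ℝ, r₁ ≤ r₂ → r₂ ≤ r₃ → min (Q r₁) (Q r₃) ≤ Q r₂ := by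
  intro r₁ r₂ r₃ h12 h23
  have hA : ∀ {a b : ℝ}, a ≤ b → (t : ℝ) - Lfun t S (b / 2) ≤ (t : ℝ) - Lfun t S (a / 2) :=
    fun h => sub_le_sub_left (Lfun_mono t S (by linarith)) _
  have hB : ∀ {a b : ℝ}, a ≤ b → Lfun t S a - t + 4 * Γ ≤ Lfun t S b - t + 4 * Γ :=
    fun h => by have := Lfun_mono t S h; linarith
  rw [hQ r₁, hQ r₂, hQ r₃]
  rcases min_cases ((t : ℝ) - Lfun t S (r₂ / 2)) (Lfun t S r₂ - t + 4 * Γ) with ⟨he, _⟩ | ⟨he, _⟩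
  · rw [he]
    calc min _ _ ≤ (1/2) * min ((t : ℝ) - Lfun t S (r₃ / 2)) (Lfun t S r₃ - t + 4 * Γ) :=
          min_le_right _ _
      _ ≤ (1/2) * ((t : ℝ) - Lfun t S (r₃ / 2)) := by
          have := min_le_left ((t : ℝ) - Lfun t S (r₃ / 2)) (Lfun t S r₃ - t + 4 * Γ)
          linarith
      _ ≤ (1/2) * ((t : ℝ) - Lfun t S (r₂ / 2)) := by have := hA h23; linarith
  · rw [he]
    calc min _ _ ≤ (1/2) * min ((t : ℝ) - Lfun t S (r₁ / 2)) (Lfun t S r₁ - t + 4 * Γ) :=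
          min_le_left _ _
      _ ≤ (1/2) * (Lfun t S r₁ - t + 4 * Γ) := by
          have := min_le_right ((t : ℝ) - Lfun t S (r₁ / 2)) (Lfun t S r₁ - t + 4 * Γ)
          linarith
      _ ≤ (1/2) * (Lfun t S r₂ - t + 4 * Γ) := by have := hB h12; linarith
end

section
/- Let d ≥ 1 be an integer, Δ ≥ 0 a real, and g : ℝ^d → {0,1} a predicate such that ‖v‖₂ ≤ Δ for every v ∈ ℝ^d with g(v) = 1. Let V be a finite multiset of vectors in ℝ^d with m = #{v ∈ V : g(v) = 1} ≥ 1, and let u ∈ ℝ^d. Then ‖avg_g(V ⊎ {u}) − avg_g(V)‖₂ ≤ 2Δ/(m+1), where V ⊎ {u} is the multiset obtained from V by adding the element u. -/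
/-- The average of the elements of the multiset `V` satisfying the predicate `g`. -/
noncomputable def avgg {d : ℕ} (g : EuclideanSpace ℝ (Fin d) → Bool)
    (V : Multiset (EuclideanSpace ℝ (Fin d))) : EuclideanSpace ℝ (Fin d) :=
  ((Multiset.card (V.filter fun v => g v = true) : ℝ))⁻¹ •
    (V.filter fun v => g v = true).sum

theorem avgg_add_sensitivity (d : ℕ) (hd : 1 ≤ d) (Δ : ℝ) (hΔ : 0 ≤ Δ)
    (g : EuclideanSpace ℝ (Fin d) → Bool)
    (hg : ∀ v, g v = true → ‖v‖ ≤ Δ)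
    (V : Multiset (EuclideanSpace ℝ (Fin d))) (m : ℕ)
    (hm : m = Multiset.card (V.filter fun v => g v = true)) (hm1 : 1 ≤ m)
    (u : EuclideanSpace ℝ (Fin d)) :
    ‖avgg g (u ::ₘ V) - avgg g V‖ ≤ 2 * Δ / (m + 1) := by
  classical
  have hm0 : (0:ℝ) < m := by exact_mod_cast hm1
  have hne : (m:ℝ) ≠ 0 := ne_of_gt hm0
  have hne1 : (m:ℝ) + 1 ≠ 0 := by positivity
  have hrhs0 : 0 ≤ 2 * Δ / (m + 1) := by positivity
  by_cases hu : g u = true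
  · have hfil : (u ::ₘ V).filter (fun v => g v = true)
        = u ::ₘ V.filter (fun v => g v = true) := by
      rw [Multiset.filter_cons_of_pos _ (by simp [hu])]
    set F := V.filter (fun v => g v = true) with hF
    set S := F.sum with hS
    have hcard : (Multiset.card F : ℝ) = m := by exact_mod_cast hm.symm
    have hSnorm : ‖S‖ ≤ m * Δ := by
      calc ‖S‖ ≤ (F.map norm).sum := norm_multiset_sum_le F
        _ ≤ Multiset.card (F.map norm) • Δ := by
            apply Multiset.sum_le_card_nsmul
            intro x hx
            obtain ⟨v, hv, rfl⟩ := Multiset.mem_map.mp hx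
            exact hg v ((Multiset.mem_filter.mp hv).2)
        _ = m * Δ := by
            rw [Multiset.card_map, nsmul_eq_mul, hcard]
    have hunorm : ‖u‖ ≤ Δ := hg u hu
    have key : avgg g (u ::ₘ V) - avgg g V
        = ((m:ℝ) * ((m:ℝ)+1))⁻¹ • ((m:ℝ) • u - S) := by
      unfold avgg
      rw [hfil, Multiset.card_cons, Multiset.sum_cons, ← hF, ← hS]
      push_cast
      rw [hcard]
      match_scalars <;> field_simp <;> ring
    rw [key, norm_smul]
    have h1 : ‖((m:ℝ) * ((m:ℝ)+1))⁻¹‖ = ((m:ℝ) * ((m:ℝ)+1))⁻¹ := by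
      rw [Real.norm_eq_abs, abs_of_pos]; positivity
    have h2 : ‖(m:ℝ) • u - S‖ ≤ 2 * ((m:ℝ) * Δ) := by
      calc ‖(m:ℝ) • u - S‖ ≤ ‖(m:ℝ) • u‖ + ‖S‖ := norm_sub_le _ _
        _ ≤ (m:ℝ) * Δ + (m:ℝ) * Δ := by
            gcongr
            rw [norm_smul, Real.norm_eq_abs, abs_of_pos hm0]
            gcongr
        _ = 2 * ((m:ℝ) * Δ) := by ring
    calc ‖((m:ℝ) * ((m:ℝ)+1))⁻¹‖ * ‖(m:ℝ) • u - S‖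
        ≤ ((m:ℝ) * ((m:ℝ)+1))⁻¹ * (2 * ((m:ℝ) * Δ)) := by
          rw [h1]; gcongr
      _ = 2 * Δ / (m + 1) := by field_simp
  · have hfil : (u ::ₘ V).filter (fun v => g v = true)
        = V.filter (fun v => g v = true) := by
      rw [Multiset.filter_cons_of_neg _ (by simp [hu])]
    have : avgg g (u ::ₘ V) = avgg g V := by unfold avgg; rw [hfil]
    rw [this, sub_self, norm_zero]
    exact hrhs0
end

section
/- Let d ≥ 1 be an integer, Δ ≥ 0 a real, and g : ℝ^d → {0,1} a predicate such that ‖v‖₂ ≤ Δ for every v ∈ ℝ^d with g(v) = 1. Let V be a finite multiset of vectors in ℝ^d with m = #{v ∈ V : g(v) = 1} ≥ 1, and let u, v ∈ ℝ^d. Then ‖avg_g(V ⊎ {u}) − avg_g(V ⊎ {v})‖₂ ≤ 4Δ/(m+1), where V ⊎ {x} is the multiset obtained from V by adding the element x. -/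
namespace Multiset

variable {E : Type*}

-- For `s = 0` this holds too, since the empty average is `0⁻¹ • 0 = 0`.
theorem inv_card_smul_sum_cons_sub [AddCommGroup E] [Module ℝ E] (x : E) (s : Multiset E) :
    ((card (x ::ₘ s) : ℝ))⁻¹ • (x ::ₘ s).sum - ((card s : ℝ))⁻¹ • s.sum =
      ((card s : ℝ) + 1)⁻¹ • (x - ((card s : ℝ))⁻¹ • s.sum) := by
  rcases eq_or_ne s 0 with rfl | hs
  · simp
  have hn : (card s : ℝ) ≠ 0 := by simpa using hs
  rw [card_cons, sum_cons, Nat.cast_succ]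
  match_scalars <;> field_simp
  ring

theorem norm_inv_card_smul_sum_le [SeminormedAddCommGroup E] [NormedSpace ℝ E]
    {s : Multiset E} {Δ : ℝ} (hΔ : 0 ≤ Δ) (hs : ∀ x ∈ s, ‖x‖ ≤ Δ) :
    ‖((card s : ℝ))⁻¹ • s.sum‖ ≤ Δ := by
  rcases eq_or_ne s 0 with rfl | hs0
  · simpa using hΔ
  have hn : (0 : ℝ) < card s := by simpa [Nat.pos_iff_ne_zero] using hs0
  have hsum : ‖s.sum‖ ≤ card s * Δ :=
    calc ‖s.sum‖ ≤ (s.map norm).sum := norm_multiset_sum_le s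
      _ ≤ card (s.map norm) • Δ := sum_le_card_nsmul _ _ (by simpa using hs)
      _ = card s * Δ := by rw [card_map, nsmul_eq_mul]
  rw [norm_smul, Real.norm_eq_abs, abs_inv, Nat.abs_cast, inv_mul_le_iff₀ hn]
  exact hsum

end Multiset

theorem avgg_cons {d : ℕ} (g : EuclideanSpace ℝ (Fin d) → Bool)
    (V : Multiset (EuclideanSpace ℝ (Fin d))) (u : EuclideanSpace ℝ (Fin d)) :
    avgg g (u ::ₘ V) = if g u then
      ((Multiset.card (u ::ₘ V.filter fun v => g v = true) : ℝ))⁻¹ •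
        (u ::ₘ V.filter fun v => g v = true).sum
    else avgg g V := by
  unfold avgg
  split_ifs with hu <;> simp [hu]

theorem norm_avgg_cons_sub_avgg_le {d : ℕ} {Δ : ℝ} (hΔ : 0 ≤ Δ)
    {g : EuclideanSpace ℝ (Fin d) → Bool} (hg : ∀ x, g x = true → ‖x‖ ≤ Δ)
    (V : Multiset (EuclideanSpace ℝ (Fin d))) (u : EuclideanSpace ℝ (Fin d)) :
    ‖avgg g (u ::ₘ V) - avgg g V‖ ≤
      2 * Δ / (Multiset.card (V.filter fun x => g x = true) + 1) := by
  rw [avgg_cons]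
  split_ifs with hu
  · rw [avgg, Multiset.inv_card_smul_sum_cons_sub, norm_smul, Real.norm_eq_abs,
      abs_of_pos (by positivity), inv_mul_eq_div]
    gcongr
    calc _ ≤ ‖u‖ + ‖_‖ := norm_sub_le _ _
      _ ≤ Δ + Δ := add_le_add (hg u hu)
          (Multiset.norm_inv_card_smul_sum_le hΔ fun x hx => hg x (Multiset.mem_filter.1 hx).2)
      _ = 2 * Δ := by ring
  · rw [sub_self, norm_zero]
    positivity

theorem avgg_swap_sensitivity_general (d : ℕ) (Δ : ℝ) (hΔ : 0 ≤ Δ)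
    (g : EuclideanSpace ℝ (Fin d) → Bool)
    (hg : ∀ x, g x = true → ‖x‖ ≤ Δ)
    (V : Multiset (EuclideanSpace ℝ (Fin d))) (m : ℕ)
    (hm : m = Multiset.card (V.filter fun x => g x = true))
    (u v : EuclideanSpace ℝ (Fin d)) :
    ‖avgg g (u ::ₘ V) - avgg g (v ::ₘ V)‖ ≤ 4 * Δ / (m + 1) := by
  subst hm
  calc ‖avgg g (u ::ₘ V) - avgg g (v ::ₘ V)‖
      ≤ ‖avgg g (u ::ₘ V) - avgg g V‖ + ‖avgg g (v ::ₘ V) - avgg g V‖ := by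
        simpa only [dist_eq_norm] using dist_triangle_right _ _ (avgg g V)
    _ ≤ 2 * Δ / (Multiset.card (V.filter fun x => g x = true) + 1) +
          2 * Δ / (Multiset.card (V.filter fun x => g x = true) + 1) :=
        add_le_add (norm_avgg_cons_sub_avgg_le hΔ hg V u) (norm_avgg_cons_sub_avgg_le hΔ hg V v)
    _ = 4 * Δ / (Multiset.card (V.filter fun x => g x = true) + 1) := by ring

theorem avgg_swap_sensitivity (d : ℕ) (hd : 1 ≤ d) (Δ : ℝ) (hΔ : 0 ≤ Δ)
    (g : EuclideanSpace ℝ (Fin d) → Bool)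
    (hg : ∀ x, g x = true → ‖x‖ ≤ Δ)
    (V : Multiset (EuclideanSpace ℝ (Fin d))) (m : ℕ)
    (hm : m = Multiset.card (V.filter fun x => g x = true)) (hm1 : 1 ≤ m)
    (u v : EuclideanSpace ℝ (Fin d)) :
    ‖avgg g (u ::ₘ V) - avgg g (v ::ₘ V)‖ ≤ 4 * Δ / (m + 1) :=
  avgg_swap_sensitivity_general d Δ hΔ g hg V m hm u v
end

section
/- Let L > 0 and 0 ≤ ℓ < L be reals, and let W ⊆ ℝ be a nonempty bounded set with sup W − inf W ≤ ℓ. Then the Lebesgue measure of the set { a ∈ [0, L] : ∃ j ∈ ℤ, W ⊆ [a + jL, a + (j+1)L) } is at least L − ℓ; equivalently, for a uniformly random a ∈ [0, L], with probability at least 1 − ℓ/L the set W is contained in a single cell of the partition of ℝ into the half-open intervals [a + jL, a + (j+1)L), j ∈ ℤ. -/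
open MeasureTheory

theorem random_shift_single_cell (L ℓ : ℝ) (hL : 0 < L) (hℓ : 0 ≤ ℓ) (hℓL : ℓ < L)
    (W : Set ℝ) (hne : W.Nonempty) (hbddA : BddAbove W) (hbddB : BddBelow W)
    (hdiam : sSup W - sInf W ≤ ℓ) :
    ENNReal.ofReal (L - ℓ) ≤
      volume {a : ℝ | a ∈ Set.Icc 0 L ∧
        ∃ j : ℤ, W ⊆ Set.Ico (a + j * L) (a + (j + 1) * L)} := by
  set m := sInf W with hm
  set M := sSup W with hM
  have hmM : m ≤ M := Real.sInf_le_sSup W hbddB hbddA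
  set δ := m - M + L with hδdef
  have hδL : δ ≤ L := by linarith
  have hδlb : L - ℓ ≤ δ := by linarith
  set j : ℤ := ⌊m / L⌋ with hj
  set r := m - j * L with hr
  have hr0 : 0 ≤ r := Int.sub_floor_div_mul_nonneg m hL
  have hrL : r < L := Int.sub_floor_div_mul_lt m hL
  have hxm : ∀ x ∈ W, m ≤ x := fun x hx => csInf_le hbddB hx
  have hxM : ∀ x ∈ W, x ≤ M := fun x hx => le_csSup hbddA hx
  have hS1 : Set.Ioc (max 0 (r - δ)) r ⊆ {a : ℝ | a ∈ Set.Icc 0 L ∧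
        ∃ j : ℤ, W ⊆ Set.Ico (a + j * L) (a + (j + 1) * L)} := by
    intro a ha
    obtain ⟨ha1, ha2⟩ := ha
    have ha0 : 0 ≤ a := le_of_lt (lt_of_le_of_lt (le_max_left _ _) ha1)
    refine ⟨⟨ha0, ha2.trans hrL.le⟩, j, ?_⟩
    intro x hx
    have hlow : r - δ < a := lt_of_le_of_lt (le_max_right 0 (r - δ)) ha1
    constructor
    · have h1 : a + (j : ℝ) * L ≤ m := by rw [hr] at ha2; linarith
      exact h1.trans (hxm x hx)
    · have h2 : M < a + ((j : ℝ) + 1) * L := by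
        rw [hr, hδdef] at hlow; nlinarith [hlow]
      exact lt_of_le_of_lt (hxM x hx) (by push_cast; linarith)
  have hS2 : Set.Ioc (r - δ + L) L ⊆ {a : ℝ | a ∈ Set.Icc 0 L ∧
        ∃ j : ℤ, W ⊆ Set.Ico (a + j * L) (a + (j + 1) * L)} := by
    intro a ha
    obtain ⟨ha1, ha2⟩ := ha
    have ha0 : 0 ≤ a := le_of_lt (lt_of_le_of_lt (by linarith : (0:ℝ) ≤ r - δ + L) ha1)
    refine ⟨⟨ha0, ha2⟩, j - 1, ?_⟩
    intro x hx
    constructor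
    · have h1 : a + ((j : ℝ) - 1) * L ≤ m := by nlinarith [hr0, ha2, hr]
      exact le_trans (by push_cast; linarith) (hxm x hx)
    · have h2 : M < a + (j : ℝ) * L := by nlinarith [ha1, hr, hδdef]
      exact lt_of_le_of_lt (hxM x hx) (by push_cast; linarith)
  have hdisj : Disjoint (Set.Ioc (max 0 (r - δ)) r) (Set.Ioc (r - δ + L) L) := by
    apply Set.disjoint_left.mpr
    intro a ha hb
    have := ha.2
    have := hb.1
    linarith
  calc ENNReal.ofReal (L - ℓ)
      ≤ volume (Set.Ioc (max 0 (r - δ)) r) + volume (Set.Ioc (r - δ + L) L) := by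
        rw [Real.volume_Ioc, Real.volume_Ioc]
        rcases le_total δ r with h | h
        · have hmax : max 0 (r - δ) = r - δ := max_eq_right (by linarith)
          rw [hmax]
          refine le_trans (ENNReal.ofReal_le_ofReal (by linarith)) le_self_add
        · have hmax : max 0 (r - δ) = 0 := max_eq_left (by linarith)
          rw [hmax]
          have : L - (r - δ + L) = δ - r := by ring
          rw [this, sub_zero, ← ENNReal.ofReal_add hr0 (by linarith)]
          exact ENNReal.ofReal_le_ofReal (by linarith)
    _ = volume (Set.Ioc (max 0 (r - δ)) r ∪ Set.Ioc (r - δ + L) L) :=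
        (measure_union hdisj measurableSet_Ioc).symm
    _ ≤ _ := measure_mono (Set.union_subset hS1 hS2)
end

section
/- Let D be a finite multiset of n real numbers, let t be a positive integer with t ≤ n, let w ≥ 1 and r > 0 be reals, and let c ∈ ℝ. Suppose that (i) the closed interval [c − r, c + r] contains at least one element of D, and (ii) every closed interval containing at least t elements of D (with multiplicity) has length at least 2r/w. Then there exists j ∈ {0, 1, …, ⌈2w⌉} such that the point e_j = c − r + j·(r/w) is an interior point of D, i.e., min D ≤ e_j ≤ max D. -/
open Classical in
/-- Number of elements of the multiset `D` (with multiplicity) lying in `[a, b]`. -/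
noncomputable def cntIn (D : Multiset ℝ) (a b : ℝ) : ℕ :=
  Multiset.card (D.filter fun x => a ≤ x ∧ x ≤ b)

/-! The grid point reached by rounding `(min D - (c - r)) / (r / w)` up lies in `[min D, max D]`:
it is at least `min D` and overshoots it by less than one step `r / w`, while the interval
`[min D, max D]` holds all `n ≥ t` points of `D` and so has length at least `2r / w`.
Rounding up never leaves `[0, ⌈2w⌉]` because `min D ≤ c + r` by (i). -/

theorem cntIn_sInf_sSup (D : Multiset ℝ) :
    cntIn D (sInf {x | x ∈ D}) (sSup {x | x ∈ D}) = Multiset.card D := by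
  rw [cntIn, Multiset.filter_eq_self.2]
  intro x hx
  exact ⟨csInf_le (Multiset.finite_toSet D).bddBelow hx,
    le_csSup (Multiset.finite_toSet D).bddAbove hx⟩

theorem add_ceil_div_mul_mem_Icc {a m M s : ℝ} (hs : 0 < s) (haM : a ≤ M) (hgap : s ≤ M - m) :
    a + ⌈(m - a) / s⌉₊ * s ∈ Set.Icc m M := by
  have hceil : m - a ≤ ⌈(m - a) / s⌉₊ * s := (div_le_iff₀ hs).1 (Nat.le_ceil _)
  refine ⟨by linarith, ?_⟩
  rcases le_or_gt m a with hma | ham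
  · rw [Nat.ceil_eq_zero.2 (div_nonpos_of_nonpos_of_nonneg (by linarith) hs.le)]
    simpa using haM
  · have hlt : (⌈(m - a) / s⌉₊ : ℝ) < (m - a) / s + 1 :=
      Nat.ceil_lt_add_one (div_nonneg (by linarith) hs.le)
    have : (⌈(m - a) / s⌉₊ : ℝ) * s < m - a + s := by
      calc (⌈(m - a) / s⌉₊ : ℝ) * s < ((m - a) / s + 1) * s := mul_lt_mul_of_pos_right hlt hs
        _ = m - a + s := by field_simp
    linarith

theorem grid_point_is_interior_general (D : Multiset ℝ) (n : ℕ) (hn : Multiset.card D = n)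
    (t : ℕ) (htn : t ≤ n)
    (w r : ℝ) (hw : 1 ≤ w) (hr : 0 < r) (c : ℝ)
    (h1 : ∃ x ∈ D, c - r ≤ x ∧ x ≤ c + r)
    (h2 : ∀ a b : ℝ, a ≤ b → t ≤ cntIn D a b → 2 * r / w ≤ b - a) :
    ∃ j : ℕ, j ≤ ⌈2 * w⌉₊ ∧
      sInf {x : ℝ | x ∈ D} ≤ c - r + (j : ℝ) * (r / w) ∧
      c - r + (j : ℝ) * (r / w) ≤ sSup {x : ℝ | x ∈ D} := by
  obtain ⟨x, hxD, hcx, hxc⟩ := h1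
  set m := sInf {x : ℝ | x ∈ D}
  set M := sSup {x : ℝ | x ∈ D}
  have hmx : m ≤ x := csInf_le (Multiset.finite_toSet D).bddBelow hxD
  have hxM : x ≤ M := le_csSup (Multiset.finite_toSet D).bddAbove hxD
  have hw0 : 0 < w := one_pos.trans_le hw
  have hs : 0 < r / w := div_pos hr hw0
  have hgap : 2 * (r / w) ≤ M - m := by
    rw [← mul_div_assoc]
    exact h2 m M (hmx.trans hxM) (by rw [cntIn_sInf_sSup, hn]; exact htn)
  refine ⟨⌈(m - (c - r)) / (r / w)⌉₊, Nat.ceil_mono ?_,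
    add_ceil_div_mul_mem_Icc hs (hcx.trans hxM) (by linarith)⟩
  rw [div_le_iff₀ hs, mul_assoc, mul_div_cancel₀ r hw0.ne']
  linarith

theorem grid_point_is_interior (D : Multiset ℝ) (n : ℕ) (hn : Multiset.card D = n)
    (t : ℕ) (ht : 1 ≤ t) (htn : t ≤ n)
    (w r : ℝ) (hw : 1 ≤ w) (hr : 0 < r) (c : ℝ)
    (h1 : ∃ x ∈ D, c - r ≤ x ∧ x ≤ c + r)
    (h2 : ∀ a b : ℝ, a ≤ b → t ≤ cntIn D a b → 2 * r / w ≤ b - a) :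
    ∃ j : ℕ, j ≤ ⌈2 * w⌉₊ ∧
      sInf {x : ℝ | x ∈ D} ≤ c - r + (j : ℝ) * (r / w) ∧
      c - r + (j : ℝ) * (r / w) ≤ sSup {x : ℝ | x ∈ D} :=
  grid_point_is_interior_general D n hn t htn w r hw hr c h1 h2
end
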